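/- In a diagnosis setting that is a weak model of failure, if C ∈ 𝔠 is an actual cause with minimal contingency set Γ, then Δ := Γ ∪ {C} is a minimal diagnosis containing C, and Γ = Δ \ {C}. -/

import Mathlib

/-!
In a weak model of failure, declaring more components abnormal can only weaken the model, so
consistency of `Th Δ` is monotone in `Δ`. Hence a proper subdiagnosis `Δ` of `Γ ∪ {C}` either
avoids `C`, and then `Th Γ` would be consistent, or contains `C`, and then `Δ \ {C}` would be a
smaller contingency set for `C`.
-/

/-- A propositional formula, identified with the set of valuations satisfying it. -/
abbrev PropFormula (V : Type*) := (V → Bool) → Prop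

/-- A set of formulas is consistent if some valuation satisfies all of them. -/
def Consistent {V : Type*} (T : Set (PropFormula V)) : Prop :=
  ∃ v : V → Bool, ∀ φ ∈ T, φ v

/-- A consistency-based diagnosis setting: a finite set of components, injective
abnormality variables, a model `M`, and an observation `Obs`. -/
structure DiagSetting (V α : Type*) where
  comps : Finset α
  ab : α → V
  ab_inj : Function.Injective ab
  M : Set (PropFormula V)
  Obs : Set (PropFormula V)

variable {V α : Type*} [DecidableEq α]

/-- `Th(Δ) = M ∪ Obs ∪ { ab C is true : C ∈ Δ } ∪ { ab C is false : C ∈ 𝔠 \ Δ }`. -/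
def DiagSetting.Th (S : DiagSetting V α) (Δ : Finset α) : Set (PropFormula V) :=
  S.M ∪ S.Obs ∪ {φ | ∃ C ∈ Δ, φ = fun v => v (S.ab C) = true}
    ∪ {φ | ∃ C ∈ S.comps \ Δ, φ = fun v => v (S.ab C) = false}

/-- `Δ` is a diagnosis if `Δ ⊆ 𝔠` and `Th(Δ)` is consistent. -/
def DiagSetting.Diagnosis (S : DiagSetting V α) (Δ : Finset α) : Prop :=
  Δ ⊆ S.comps ∧ Consistent (S.Th Δ)

/-- A diagnosis is minimal if no proper subset of it is a diagnosis. -/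
def DiagSetting.MinimalDiagnosis (S : DiagSetting V α) (Δ : Finset α) : Prop :=
  S.Diagnosis Δ ∧ ∀ Δ' ⊂ Δ, ¬ S.Diagnosis Δ'

/-- `C` is a counterfactual cause if `Th({C})` is consistent. -/
def DiagSetting.CounterfactualCause (S : DiagSetting V α) (C : α) : Prop :=
  C ∈ S.comps ∧ Consistent (S.Th {C})

/-- `Γ ⊆ 𝔠 \ {C}` is a contingency set for `C ∈ 𝔠` if `Th(Γ)` is inconsistent
and `Th(Γ ∪ {C})` is consistent. -/
def DiagSetting.ContingencySet (S : DiagSetting V α) (C : α) (Γ : Finset α) : Prop :=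
  C ∈ S.comps ∧ Γ ⊆ S.comps.erase C ∧ ¬ Consistent (S.Th Γ) ∧ Consistent (S.Th (insert C Γ))

/-- `C` is an actual cause if it has a contingency set. -/
def DiagSetting.ActualCause (S : DiagSetting V α) (C : α) : Prop :=
  ∃ Γ : Finset α, S.ContingencySet C Γ

/-- A contingency set for `C` is minimal if no proper subset is a contingency set for `C`. -/
def DiagSetting.MinimalContingencySet (S : DiagSetting V α) (C : α) (Γ : Finset α) : Prop :=
  S.ContingencySet C Γ ∧ ∀ Γ' ⊂ Γ, ¬ S.ContingencySet C Γ'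

/-- The truth value of `φ` does not depend on any abnormality variable `ab C'`, `C' ∈ 𝔠`. -/
def DiagSetting.IndepAb (S : DiagSetting V α) (φ : PropFormula V) : Prop :=
  ∀ v v' : V → Bool, (∀ x : V, (∀ C ∈ S.comps, S.ab C ≠ x) → v x = v' x) → (φ v ↔ φ v')

/-- A weak model of failure: every formula of `M` is semantically of the form
`(ab C is true) ∨ ψ` with `ψ` independent of the abnormality variables, and every
formula of `Obs` is independent of the abnormality variables. -/
def DiagSetting.WeakModel (S : DiagSetting V α) : Prop :=
  (∀ φ ∈ S.M, ∃ C ∈ S.comps, ∃ ψ : PropFormula V,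
      S.IndepAb ψ ∧ ∀ v, φ v ↔ (v (S.ab C) = true ∨ ψ v)) ∧
  (∀ φ ∈ S.Obs, S.IndepAb φ)

open Classical in
/-- Responsibility: `1/(1+|Γ|)` for a minimum-cardinality contingency set `Γ` for `C`
if `C` is an actual cause, and `0` otherwise. -/
noncomputable def DiagSetting.Resp (S : DiagSetting V α) (C : α) : ℚ :=
  if S.ActualCause C then
    1 / (1 + ((sInf {n : ℕ | ∃ Γ : Finset α, S.ContingencySet C Γ ∧ Γ.card = n} : ℕ) : ℚ))
  else 0

namespace DiagSetting

variable (S : DiagSetting V α)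

theorem forall_mem_Th_iff {Δ : Finset α} {v : V → Bool} :
    (∀ φ ∈ S.Th Δ, φ v) ↔
      (∀ φ ∈ S.M, φ v) ∧ (∀ φ ∈ S.Obs, φ v) ∧ (∀ C ∈ Δ, v (S.ab C) = true) ∧
        ∀ C ∈ S.comps \ Δ, v (S.ab C) = false := by
  simp only [Th, Set.mem_union, Set.mem_ofPred_eq, or_imp, forall_and, forall_exists_index,
    and_imp]
  grind

open Classical in
noncomputable def resetAb (Δ : Finset α) (v : V → Bool) : V → Bool := fun x =>
  if ∃ C ∈ S.comps, S.ab C = x then decide (∃ C ∈ Δ, S.ab C = x) else v x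

theorem resetAb_ab {Δ : Finset α} {C : α} (v : V → Bool) (hC : C ∈ S.comps) :
    S.resetAb Δ v (S.ab C) = decide (C ∈ Δ) := by
  simp [resetAb, S.ab_inj.eq_iff, hC]

omit [DecidableEq α] in
theorem resetAb_of_forall_ne {Δ : Finset α} (v : V → Bool) {x : V}
    (hx : ∀ C ∈ S.comps, S.ab C ≠ x) : S.resetAb Δ v x = v x :=
  if_neg fun ⟨C, hC, hCx⟩ => hx C hC hCx

omit [DecidableEq α] in
theorem IndepAb.resetAb_iff {S : DiagSetting V α} {φ : PropFormula V} (hφ : S.IndepAb φ)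
    (Δ : Finset α) (v : V → Bool) : φ (S.resetAb Δ v) ↔ φ v :=
  hφ _ _ fun _ hx => S.resetAb_of_forall_ne v hx

/-- Witness: a model of `Th Δ` with its abnormality variables reset to `Δ'`. Each formula
`ab D ∨ ψ` of `M` survives because `ab D` can only switch from false to true. -/
theorem consistent_Th_mono (hW : S.WeakModel) {Δ Δ' : Finset α} (hΔ : Δ ⊆ Δ')
    (hΔ' : Δ' ⊆ S.comps) (hc : Consistent (S.Th Δ)) : Consistent (S.Th Δ') := by
  obtain ⟨v, hv⟩ := hc
  obtain ⟨hvM, hvObs, -, hvFalse⟩ := (S.forall_mem_Th_iff).1 hv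
  refine ⟨S.resetAb Δ' v, (S.forall_mem_Th_iff).2 ⟨?_, ?_, ?_, ?_⟩⟩
  · intro φ hφ
    obtain ⟨D, hD, ψ, hψ, hφψ⟩ := hW.1 φ hφ
    rw [hφψ, hψ.resetAb_iff, S.resetAb_ab v hD, decide_eq_true_iff]
    by_cases hDΔ : D ∈ Δ
    · exact Or.inl (hΔ hDΔ)
    · have hvD := hvFalse D (Finset.mem_sdiff.2 ⟨hD, hDΔ⟩)
      exact Or.inr (by simpa [hvD] using (hφψ v).1 (hvM φ hφ))
  · exact fun φ hφ => ((hW.2 φ hφ).resetAb_iff Δ' v).2 (hvObs φ hφ)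
  · exact fun C hC => by simp [S.resetAb_ab v (hΔ' hC), hC]
  · intro C hC
    obtain ⟨hC, hCΔ'⟩ := Finset.mem_sdiff.1 hC
    simp [S.resetAb_ab v hC, hCΔ']

variable {S}

theorem ContingencySet.notMem {C : α} {Γ : Finset α} (h : S.ContingencySet C Γ) : C ∉ Γ :=
  fun hC => Finset.notMem_erase C S.comps (h.2.1 hC)

theorem ContingencySet.subset_comps {C : α} {Γ : Finset α} (h : S.ContingencySet C Γ) :
    Γ ⊆ S.comps :=
  h.2.1.trans (Finset.erase_subset C S.comps)

theorem ContingencySet.diagnosis_insert {C : α} {Γ : Finset α} (h : S.ContingencySet C Γ) :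
    S.Diagnosis (insert C Γ) :=
  ⟨Finset.insert_subset h.1 h.subset_comps, h.2.2.2⟩

theorem ContingencySet.of_subset (hW : S.WeakModel) {C : α} {Γ Γ' : Finset α}
    (h : S.ContingencySet C Γ) (hΓ' : Γ' ⊆ Γ) (hc : Consistent (S.Th (insert C Γ'))) :
    S.ContingencySet C Γ' :=
  ⟨h.1, hΓ'.trans h.2.1,
    fun hc' => h.2.2.1 (S.consistent_Th_mono hW hΓ' h.subset_comps hc'), hc⟩

theorem MinimalContingencySet.minimalDiagnosis_insert (hW : S.WeakModel) {C : α}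
    {Γ : Finset α} (h : S.MinimalContingencySet C Γ) : S.MinimalDiagnosis (insert C Γ) := by
  obtain ⟨hΓ, hmin⟩ := h
  refine ⟨hΓ.diagnosis_insert, fun Δ hΔ ⟨hΔc, hΔcons⟩ => ?_⟩
  by_cases hCΔ : C ∈ Δ
  · have hsub : Δ.erase C ⊂ Γ := by
      refine Finset.ssubset_iff_subset_ne.2 ⟨Finset.subset_insert_iff.1 hΔ.1, ?_⟩
      rintro hΔΓ
      exact hΔ.2 (by rw [← hΔΓ, Finset.insert_erase hCΔ])
    refine hmin _ hsub (hΓ.of_subset hW hsub.1 ?_)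
    rwa [Finset.insert_erase hCΔ]
  · have hΔΓ : Δ ⊆ Γ := (Finset.subset_insert_iff_of_notMem hCΔ).1 hΔ.1
    exact hΓ.2.2.1 (S.consistent_Th_mono hW hΔΓ hΓ.subset_comps hΔcons)

end DiagSetting

/-- In a weak model of failure, if `C` is an actual cause with minimal
contingency set `Γ`, then `Δ := Γ ∪ {C}` is a minimal diagnosis containing `C`,
and `Γ = Δ \ {C}`. -/
theorem minimalContingencySet_insert_minimalDiagnosis
    (S : DiagSetting V α) (hW : S.WeakModel) (C : α) (Γ : Finset α)
    (h : S.MinimalContingencySet C Γ) :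
    S.MinimalDiagnosis (insert C Γ) ∧ C ∈ insert C Γ ∧ Γ = (insert C Γ).erase C :=
  ⟨h.minimalDiagnosis_insert hW, Finset.mem_insert_self C Γ,
    (Finset.erase_insert h.1.notMem).symm⟩
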